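/- For each prime p, natural number n, and natural number k, there is a first-order sentence in the language of abelian groups {+, -, 0} which holds in an abelian group G if and only if dim_{𝔽_p}(p^n G[p] / p^{n+1} G[p]) ≥ k, where G[p] = {g : pg = 0}. -/
import Mathlib


open FirstOrder FirstOrder.Language

/-- The first-order language `{+, -, 0}` of abelian groups. -/
def abLang : Language where
  Functions
    | 0 => Unit   -- the constant 0
    | 1 => Unit   -- negation
    | 2 => Unit   -- addition
    | _ + 3 => Empty
  Relations := fun _ => Empty

/-- The natural `abLang`-structure on an abelian group. -/
def abStructure (G : Type) [AddCommGroup G] : abLang.Structure G where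
  funMap {n} f x :=
    match n, f with
    | 0, _ => 0
    | 1, _ => -(x 0)
    | 2, _ => x 0 + x 1
  RelMap {n} r _ := r.elim

/-- The subgroup `pⁿG[p] = pⁿG ∩ G[p]` of elements of the form `pⁿ • x` that are
annihilated by `p`. -/
def szmielewSubgroup (G : Type) [AddCommGroup G] (p n : ℕ) : AddSubgroup G where
  carrier := {g | (∃ x : G, p ^ n • x = g) ∧ p • g = 0}
  zero_mem' := ⟨⟨0, smul_zero _⟩, smul_zero _⟩
  add_mem' := fun {a b} ha hb =>
    ⟨⟨ha.1.choose + hb.1.choose, by rw [smul_add, ha.1.choose_spec, hb.1.choose_spec]⟩,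
      by rw [smul_add, ha.2, hb.2, add_zero]⟩
  neg_mem' := fun {a} ha =>
    ⟨⟨-ha.1.choose, by rw [smul_neg, ha.1.choose_spec]⟩, by rw [smul_neg, ha.2, neg_zero]⟩

/-- The quotient `pⁿG[p] / pⁿ⁺¹G[p]`. -/
abbrev szmielewQuotient (G : Type) [AddCommGroup G] (p n : ℕ) : Type :=
  szmielewSubgroup G p n ⧸
    (szmielewSubgroup G p (n + 1)).addSubgroupOf (szmielewSubgroup G p n)

/-- The quotient `pⁿG[p] / pⁿ⁺¹G[p]` is a vector space over `𝔽_p = ZMod p`. -/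
noncomputable instance szmielewModule (G : Type) [AddCommGroup G] (p n : ℕ) :
    Module (ZMod p) (szmielewQuotient G p n) :=
  QuotientAddGroup.zmodModule (by
    intro x
    have hx : p • x = 0 := Subtype.ext (by simpa using x.2.2)
    rw [hx]
    exact zero_mem _)

/-- The Szmielew invariant `U(p, n, G) = min(ω, dim_{𝔽_p} (pⁿG[p] / pⁿ⁺¹G[p]))`. -/
noncomputable def szmielewInvariant (G : Type) [AddCommGroup G] (p n : ℕ) : Cardinal :=
  min Cardinal.aleph0 (Module.rank (ZMod p) (szmielewQuotient G p n))

namespace SzmAux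
attribute [local instance] abStructure

def zeroT {α : Type} : abLang.Term α := Term.func (l := 0) () ![]
def addT {α : Type} (s t : abLang.Term α) : abLang.Term α := Term.func (l := 2) () ![s, t]
def smulT {α : Type} : ℕ → abLang.Term α → abLang.Term α
  | 0, _ => zeroT
  | m + 1, t => addT t (smulT m t)
def sumT {α : Type} : {m : ℕ} → (Fin m → abLang.Term α) → abLang.Term α
  | 0, _ => zeroT
  | _ + 1, f => addT (f 0) (sumT fun i => f i.succ)

variable {G : Type} [AddCommGroup G] {α : Type}

@[simp] lemma realize_zeroT (v : α → G) : (zeroT (α := α)).realize v = 0 := rfl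
@[simp] lemma realize_addT (s t : abLang.Term α) (v : α → G) :
    (addT s t).realize v = s.realize v + t.realize v := rfl
@[simp] lemma realize_smulT (m : ℕ) (t : abLang.Term α) (v : α → G) :
    (smulT m t).realize v = m • t.realize v := by
  induction m with
  | zero => simp [smulT]
  | succ m ih => rw [smulT, realize_addT, ih, succ_nsmul, add_comm]
@[simp] lemma realize_sumT : ∀ {m : ℕ} (f : Fin m → abLang.Term α) (v : α → G),
    (sumT f).realize v = ∑ i, (f i).realize v
  | 0, f, v => by simp [sumT]
  | m + 1, f, v => by
    rw [sumT, realize_addT, realize_sumT, Fin.sum_univ_succ]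


variable {k : ℕ}

/-- The term for the `i`-th free variable. -/
def xT (k : ℕ) (i : Fin k) : abLang.Term (Empty ⊕ Fin k) := Term.var (Sum.inr i)

/-- `p • t = 0`. -/
def annF (p k : ℕ) (t : abLang.Term (Empty ⊕ Fin k)) : abLang.BoundedFormula Empty k :=
  Term.bdEqual (smulT p t) zeroT

/-- `∃ z, m • z = t`. -/
def divF (m k : ℕ) (t : abLang.Term (Empty ⊕ Fin k)) : abLang.BoundedFormula Empty k :=
  BoundedFormula.ex (Term.bdEqual (smulT m (Term.var (Sum.inr (Fin.last k))))
    (t.relabel (Sum.map id Fin.castSucc)))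

variable {G : Type} [AddCommGroup G]

@[simp] lemma realize_annF (p : ℕ) (t : abLang.Term (Empty ⊕ Fin k)) (v : Empty → G)
    (xs : Fin k → G) :
    (annF p k t).Realize v xs ↔ p • t.realize (Sum.elim v xs) = 0 := by
  simp [annF, BoundedFormula.realize_bdEqual]

@[simp] lemma realize_divF (m : ℕ) (t : abLang.Term (Empty ⊕ Fin k)) (v : Empty → G)
    (xs : Fin k → G) :
    (divF m k t).Realize v xs ↔ ∃ z : G, m • z = t.realize (Sum.elim v xs) := by
  simp only [divF, BoundedFormula.realize_ex, BoundedFormula.realize_bdEqual,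
    Term.realize_relabel, realize_smulT]
  refine exists_congr fun z => ?_
  have h1 : (Sum.elim v (Fin.snoc xs z) ∘ Sum.map id Fin.castSucc) = Sum.elim v xs := by
    funext x
    cases x with
    | inl e => rfl
    | inr i => simp [Fin.snoc_castSucc]
  rw [h1]
  simp [Term.realize, Fin.snoc_last]

/-- Finite conjunction of a list of formulas. -/
def andAll {n : ℕ} : List (abLang.BoundedFormula Empty n) → abLang.BoundedFormula Empty n
  | [] => ⊤
  | f :: l => f ⊓ andAll l

@[simp] lemma realize_andAll {n : ℕ} (l : List (abLang.BoundedFormula Empty n))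
    (v : Empty → G) (xs : Fin n → G) :
    (andAll l).Realize v xs ↔ ∀ f ∈ l, f.Realize v xs := by
  induction l with
  | nil => simp [andAll]
  | cons f l ih => simp [andAll, ih]

/-- `∑ i, c i • xᵢ`. -/
def combT (k : ℕ) (c : Fin k → ℕ) : abLang.Term (Empty ⊕ Fin k) :=
  sumT fun i => smulT (c i) (xT k i)

@[simp] lemma realize_combT (c : Fin k → ℕ) (v : Empty → G) (xs : Fin k → G) :
    (combT k c).realize (Sum.elim v xs) = ∑ i, c i • xs i := by
  simp [combT, xT, Term.realize]

/-- The quantifier-free part of the sentence. -/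
noncomputable def matrixF (p n k : ℕ) : abLang.BoundedFormula Empty k :=
  (andAll ((List.finRange k).map fun i => annF p k (xT k i) ⊓ divF (p ^ n) k (xT k i))) ⊓
  (andAll (((Finset.univ : Finset (Fin k → Fin p)).toList.filter
      (fun c => ¬ ∀ i, (c i : ℕ) = 0)).map
    fun c => (divF (p ^ (n + 1)) k (combT k fun i => (c i : ℕ))).not))

lemma realize_matrixF (p n : ℕ) (v : Empty → G) (xs : Fin k → G) :
    (matrixF p n k).Realize v xs ↔
      ((∀ i, p • xs i = 0 ∧ ∃ y : G, p ^ n • y = xs i) ∧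
        ∀ c : Fin k → Fin p, (¬ ∀ i, (c i : ℕ) = 0) →
          ¬ ∃ z : G, p ^ (n + 1) • z = ∑ i, (c i : ℕ) • xs i) := by
  simp only [matrixF, BoundedFormula.realize_inf, realize_andAll, List.mem_map,
    List.mem_filter, Finset.mem_toList, Finset.mem_univ, true_and, List.mem_finRange]
  constructor
  · rintro ⟨h1, h2⟩
    refine ⟨fun i => ?_, fun c hc => ?_⟩
    · have := h1 _ ⟨i, rfl⟩
      rw [BoundedFormula.realize_inf, realize_annF, realize_divF] at this
      simpa [xT, Term.realize] using this
    · have := h2 _ ⟨c, by simpa using hc, rfl⟩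
      rw [BoundedFormula.realize_not, realize_divF] at this
      simpa using this
  · rintro ⟨h1, h2⟩
    constructor
    · rintro f ⟨i, rfl⟩
      rw [BoundedFormula.realize_inf, realize_annF, realize_divF]
      simpa [xT, Term.realize] using h1 i
    · rintro f ⟨c, hc, rfl⟩
      rw [BoundedFormula.realize_not, realize_divF]
      simpa using h2 c (by simpa using hc)

end SzmAux

lemma SzmAux.key (p : ℕ) (hp : p.Prime) (n k : ℕ) (G : Type) [AddCommGroup G] :
    (∃ xs : Fin k → G, (∀ i, p • xs i = 0 ∧ ∃ y : G, p ^ n • y = xs i) ∧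
        ∀ c : Fin k → Fin p, (¬ ∀ i, (c i : ℕ) = 0) →
          ¬ ∃ z : G, p ^ (n + 1) • z = ∑ i, (c i : ℕ) • xs i) ↔
      (k : Cardinal) ≤ Module.rank (ZMod p) (szmielewQuotient G p n) := by
  haveI : Fact p.Prime := ⟨hp⟩
  set S := szmielewSubgroup G p n with hS
  set N := (szmielewSubgroup G p (n + 1)).addSubgroupOf (szmielewSubgroup G p n) with hN
  set π := QuotientAddGroup.mk' N with hπ
  have hcoe : ∀ (m : Fin k → ℕ) (ys : Fin k → S),
      ((∑ j, m j • ys j : S) : G) = ∑ j, m j • (ys j : G) := by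
    intro m ys
    rw [← AddSubgroup.coe_subtype, map_sum]
    simp
  constructor
  · rintro ⟨xs, h1, h2⟩
    set ys : Fin k → S := fun i => ⟨xs i, (h1 i).2, (h1 i).1⟩ with hys
    have hli : LinearIndependent (ZMod p) (fun i => π (ys i)) := by
      rw [Fintype.linearIndependent_iff]
      intro g hg i
      by_contra hgi
      set c : Fin k → Fin p := fun j => ⟨(g j).val, ZMod.val_lt _⟩ with hc
      have hcne : ¬ ∀ j, (c j : ℕ) = 0 := by
        intro hall
        apply hgi
        have h0 : (g i).val = 0 := hall i
        rw [← ZMod.natCast_zmod_val (g i), h0, Nat.cast_zero]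
      refine h2 c hcne ?_
      have hg' : π (∑ j, (g j).val • ys j) = 0 := by
        rw [map_sum, ← hg]
        refine Finset.sum_congr rfl fun j _ => ?_
        rw [map_nsmul, ← Nat.cast_smul_eq_nsmul (ZMod p), ZMod.natCast_zmod_val]
      rw [QuotientAddGroup.mk'_apply, QuotientAddGroup.eq_zero_iff] at hg'
      have hmem : ((∑ j, (g j).val • ys j : S) : G) ∈ szmielewSubgroup G p (n + 1) := hg'
      obtain ⟨⟨z, hz⟩, -⟩ := hmem
      refine ⟨z, ?_⟩
      rw [hz, hcoe]
    have hcard := hli.cardinal_le_rank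
    simpa using hcard
  · intro hrank
    rw [le_rank_iff_exists_linearIndependent_finset] at hrank
    obtain ⟨s, hs, hli⟩ := hrank
    have e : Fin k ≃ ↥(s : Set (szmielewQuotient G p n)) :=
      (Fintype.equivFinOfCardEq (by simpa using hs)).symm
    set f : Fin k → szmielewQuotient G p n := fun i => (e i : _) with hf
    have hfli : LinearIndependent (ZMod p) f := hli.comp e e.injective
    have hsurj := QuotientAddGroup.mk'_surjective N
    choose ys hys using fun i => hsurj (f i)
    refine ⟨fun i => (ys i : G), fun i => ⟨(ys i).2.2, (ys i).2.1⟩, ?_⟩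
    rintro c hc ⟨z, hz⟩
    have hz0 : p • (∑ i, (c i : ℕ) • ((ys i : G))) = 0 := by
      rw [Finset.smul_sum]
      refine Finset.sum_eq_zero fun i _ => ?_
      rw [smul_comm, (ys i).2.2, smul_zero]
    have hmem : ((∑ i, (c i : ℕ) • ys i : S) : G) ∈ szmielewSubgroup G p (n + 1) := by
      rw [hcoe]
      exact ⟨⟨z, hz⟩, hz0⟩
    have hq : π (∑ i, (c i : ℕ) • ys i) = 0 := by
      rw [QuotientAddGroup.mk'_apply, QuotientAddGroup.eq_zero_iff]
      exact hmem
    have hq' : ∑ i, ((c i : ℕ) : ZMod p) • f i = 0 := by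
      rw [map_sum] at hq
      rw [← hq]
      refine Finset.sum_congr rfl fun i _ => ?_
      rw [map_nsmul, hys, Nat.cast_smul_eq_nsmul]
    have := Fintype.linearIndependent_iff.1 hfli _ hq'
    apply hc
    intro i
    have hdvd : p ∣ (c i : ℕ) := (ZMod.natCast_eq_zero_iff _ _).1 (this i)
    exact Nat.eq_zero_of_dvd_of_lt hdvd (c i).2

/-- For each prime `p` and naturals `n`, `k`, there is a first-order sentence of `{+,-,0}`
holding in an abelian group `G` iff `dim_{𝔽_p} (pⁿG[p]/pⁿ⁺¹G[p]) ≥ k`. -/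
theorem szmielew_dim_ge_definable (p : ℕ) (hp : p.Prime) (n k : ℕ) :
    ∃ φ : abLang.Sentence, ∀ (G : Type) [AddCommGroup G],
      ((letI := abStructure G; G ⊨ φ) ↔
        (k : Cardinal) ≤ Module.rank (ZMod p) (szmielewQuotient G p n)) := by
  refine ⟨(SzmAux.matrixF p n k).exs, fun G _ => ?_⟩
  letI := abStructure G
  have h1 : (G ⊨ (SzmAux.matrixF p n k).exs) ↔
      ∃ xs : Fin k → G, (SzmAux.matrixF p n k).Realize default xs :=
    BoundedFormula.realize_exs
  rw [h1]
  rw [← SzmAux.key p hp n k G]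
  refine exists_congr fun xs => ?_
  rw [SzmAux.realize_matrixF]
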